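/- The map 𝒯 is well-defined: there exists a (unique) ℂ-linear map 𝒯: U(t𝔤[t]) → U(𝔮[t]) satisfying 𝒯(ξt^k) = k·(ξu)t^{k−1} for all ξ ∈ 𝔤 and k ≥ 1, and the Leibniz rule 𝒯(ab) = 𝒯(a)b + a·𝒯(b) for all a, b ∈ U(t𝔤[t]), where all products are taken in U(𝔮[t]) via the natural inclusion U(t𝔤[t]) ⊂ U(𝔮[t]). -/

import Mathlib

open scoped BigOperators

set_option synthInstance.maxHeartbeats 1000000
set_option maxHeartbeats 1600000

noncomputable section

def jacobian {n : ℕ} (Q : Fin n → MvPolynomial (Fin n) ℂ) : MvPolynomial (Fin n) ℂ :=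
  (Matrix.of fun i j => MvPolynomial.pderiv j (Q i)).det

def tEqOne {n : ℕ} : MvPolynomial (Fin n × ℕ) ℂ →ₐ[ℂ] MvPolynomial (Fin n) ℂ :=
  MvPolynomial.aeval fun p => MvPolynomial.X p.1

def dpartial {n : ℕ} (j : Fin n) (P : MvPolynomial (Fin n × ℕ) ℂ) : MvPolynomial (Fin n) ℂ :=
  ∑ᶠ k : ℕ, (k : ℂ) • tEqOne (MvPolynomial.pderiv (j, k) P)

def jacobianT {n : ℕ} (P : Fin n → MvPolynomial (Fin n × ℕ) ℂ) : MvPolynomial (Fin n) ℂ :=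
  (Matrix.of fun i j => dpartial j (P i)).det

def IsSymmetricAlgebra' {g S : Type} [AddCommGroup g] [Module ℂ g] [CommRing S] [Algebra ℂ S]
    (ι : g →ₗ[ℂ] S) : Prop :=
  ∀ (A : Type) [CommRing A] [Algebra ℂ A], ∀ φ : g →ₗ[ℂ] A,
    ∃! Φ : S →ₐ[ℂ] A, ∀ x, Φ (ι x) = φ x

def saLift {g S A : Type} [AddCommGroup g] [Module ℂ g] [CommRing S] [Algebra ℂ S]
    [CommRing A] [Algebra ℂ A] {ι : g →ₗ[ℂ] S} (hS : IsSymmetricAlgebra' ι)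
    (φ : g →ₗ[ℂ] A) : S →ₐ[ℂ] A :=
  (hS A φ).choose

def IsHomogOfDeg {g S : Type} [AddCommGroup g] [Module ℂ g] [CommRing S] [Algebra ℂ S]
    (ι : g →ₗ[ℂ] S) (hS : IsSymmetricAlgebra' ι) (d : ℕ) (H : S) : Prop :=
  ∀ c : ℂ, saLift hS (c • ι) H = c ^ d • H

def IsSymmetrisation {L : Type} [LieRing L] [LieAlgebra ℂ L] {S : Type} [CommRing S]
    [Algebra ℂ S] (ι : L →ₗ[ℂ] S)
    (ϖ : S →ₗ[ℂ] UniversalEnvelopingAlgebra ℂ L) : Prop :=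
  ∀ (d : ℕ) (x : Fin d → L),
    ϖ (∏ i, ι (x i)) = (d.factorial : ℂ)⁻¹ •
      ∑ σ : Equiv.Perm (Fin d),
        (List.ofFn fun i => UniversalEnvelopingAlgebra.ι ℂ (x (σ i))).prod

def rootSpaceOf {g : Type} [LieRing g] [LieAlgebra ℂ g] (hsub : LieSubalgebra ℂ g)
    (α : Module.Dual ℂ ↥hsub) : Submodule ℂ g where
  carrier := {x | ∀ t : hsub, ⁅(t : g), x⁆ = α t • x}
  add_mem' := by intro a b ha hb t; rw [lie_add, ha t, hb t, smul_add]
  zero_mem' := by intro t; rw [lie_zero, smul_zero]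
  smul_mem' := by intro c a ha t; rw [lie_smul, ha t, smul_comm]

attribute [local instance 100] LieRing.ofAssociativeRing

/-- The subalgebra `U(t𝔤[t]) ⊆ U(𝔤[t])`, generated by the elements `x tᵏ` with `k ≥ 1`. -/
def tPartSubalgebra {g gt : Type} [AddCommGroup g] [Module ℂ g] [LieRing gt] [LieAlgebra ℂ gt]
    (jg : ℕ → g →ₗ[ℂ] gt) : Subalgebra ℂ (UniversalEnvelopingAlgebra ℂ gt) :=
  Algebra.adjoin ℂ
    {z | ∃ (x : g) (k : ℕ), 1 ≤ k ∧ z = UniversalEnvelopingAlgebra.ι ℂ (jg k x)}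
section TakiffAux

variable {g : Type} [LieRing g] [LieAlgebra ℂ g]
    {gt : Type} [LieRing gt] [LieAlgebra ℂ gt]
    {q : Type} [LieRing q] [LieAlgebra ℂ q]
    {qt : Type} [LieRing qt] [LieAlgebra ℂ qt]

/-- The "derivative" linear map on `𝔤[t]`, sending `x tᵏ` to `k (xu) t^{k-1}` inside `U(𝔮[t])`. -/
noncomputable def auxD (jg : ℕ → g →ₗ[ℂ] gt) (i1 : g →ₗ[ℂ] q) (jq : ℕ → q →ₗ[ℂ] qt)
    (hgtInternal : DirectSum.IsInternal fun k : ℕ => LinearMap.range (jg k))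
    (hjgInj : ∀ k, Function.Injective (jg k)) :
    gt →ₗ[ℂ] UniversalEnvelopingAlgebra ℂ qt :=
  (DirectSum.toModule ℂ ℕ _ fun k =>
      (k : ℂ) • ((UniversalEnvelopingAlgebra.ι ℂ).toLinearMap ∘ₗ jq (k - 1) ∘ₗ i1 ∘ₗ
        ((LinearEquiv.ofInjective (jg k) (hjgInj k)).symm.toLinearMap))) ∘ₗ
    ((LinearEquiv.ofBijective (DirectSum.coeLinearMap fun k => LinearMap.range (jg k))
        hgtInternal).symm.toLinearMap)

lemma auxD_apply (jg : ℕ → g →ₗ[ℂ] gt) (i1 : g →ₗ[ℂ] q) (jq : ℕ → q →ₗ[ℂ] qt)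
    (hgtInternal : DirectSum.IsInternal fun k : ℕ => LinearMap.range (jg k))
    (hjgInj : ∀ k, Function.Injective (jg k)) (k : ℕ) (x : g) :
    auxD jg i1 jq hgtInternal hjgInj (jg k x)
      = (k : ℂ) • UniversalEnvelopingAlgebra.ι ℂ (jq (k - 1) (i1 x)) := by
  have hmem : jg k x ∈ LinearMap.range (jg k) := ⟨x, rfl⟩
  set e := LinearEquiv.ofBijective (DirectSum.coeLinearMap fun k => LinearMap.range (jg k))
    hgtInternal with he_def
  have he : e.symm (jg k x)
      = DirectSum.lof ℂ ℕ (fun k => ↥(LinearMap.range (jg k))) k ⟨jg k x, hmem⟩ := by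
    rw [LinearEquiv.symm_apply_eq, he_def]
    show jg k x = DirectSum.coeLinearMap (fun k => LinearMap.range (jg k))
      (DirectSum.lof ℂ ℕ (fun k => ↥(LinearMap.range (jg k))) k ⟨jg k x, hmem⟩)
    rw [DirectSum.lof_eq_of, DirectSum.coeLinearMap_of]
  have hsymm : (LinearEquiv.ofInjective (jg k) (hjgInj k)).symm ⟨jg k x, hmem⟩ = x := by
    have h2 : (LinearEquiv.ofInjective (jg k) (hjgInj k)) x = ⟨jg k x, hmem⟩ :=
      Subtype.ext (LinearEquiv.ofInjective_apply (jg k) x)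
    rw [← h2, LinearEquiv.symm_apply_apply]
  show (DirectSum.toModule ℂ ℕ _ _) (e.symm (jg k x)) = _
  rw [he, DirectSum.toModule_lof]
  simp [hsymm]

/-- The linear map `𝔤[t] → U(𝔮[t])[ε]`, `x ↦ (x, Dx)`. -/
noncomputable def auxLmap (jg : ℕ → g →ₗ[ℂ] gt) (i1 : g →ₗ[ℂ] q) (jq : ℕ → q →ₗ[ℂ] qt)
    (emb : gt →ₗ⁅ℂ⁆ qt)
    (hgtInternal : DirectSum.IsInternal fun k : ℕ => LinearMap.range (jg k))
    (hjgInj : ∀ k, Function.Injective (jg k)) :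
    gt →ₗ[ℂ] TrivSqZeroExt (UniversalEnvelopingAlgebra ℂ qt) (UniversalEnvelopingAlgebra ℂ qt)
    where
  toFun x := TrivSqZeroExt.inl (UniversalEnvelopingAlgebra.ι ℂ (emb x)) +
    TrivSqZeroExt.inr (auxD jg i1 jq hgtInternal hjgInj x)
  map_add' x y := by
    apply TrivSqZeroExt.ext <;>
      simp [TrivSqZeroExt.fst_add, TrivSqZeroExt.snd_add]
  map_smul' c x := by
    apply TrivSqZeroExt.ext <;>
      simp [TrivSqZeroExt.fst_add, TrivSqZeroExt.snd_add, TrivSqZeroExt.fst_smul,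
        TrivSqZeroExt.snd_smul]

lemma auxLmap_fst (jg : ℕ → g →ₗ[ℂ] gt) (i1 : g →ₗ[ℂ] q) (jq : ℕ → q →ₗ[ℂ] qt)
    (emb : gt →ₗ⁅ℂ⁆ qt)
    (hgtInternal : DirectSum.IsInternal fun k : ℕ => LinearMap.range (jg k))
    (hjgInj : ∀ k, Function.Injective (jg k)) (x : gt) :
    (auxLmap jg i1 jq emb hgtInternal hjgInj x).fst
      = UniversalEnvelopingAlgebra.ι ℂ (emb x) := by
  simp [auxLmap]

lemma auxLmap_snd (jg : ℕ → g →ₗ[ℂ] gt) (i1 : g →ₗ[ℂ] q) (jq : ℕ → q →ₗ[ℂ] qt)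
    (emb : gt →ₗ⁅ℂ⁆ qt)
    (hgtInternal : DirectSum.IsInternal fun k : ℕ => LinearMap.range (jg k))
    (hjgInj : ∀ k, Function.Injective (jg k)) (x : gt) :
    (auxLmap jg i1 jq emb hgtInternal hjgInj x).snd
      = auxD jg i1 jq hgtInternal hjgInj x := by
  simp [auxLmap]

/-- The commutator identity in `U(𝔮[t])`. -/
lemma aux_comm (jq : ℕ → q →ₗ[ℂ] qt)
    (hjq : ∀ (k m : ℕ) (z w : q), ⁅jq k z, jq m w⁆ = jq (k + m) ⁅z, w⁆)
    (k m : ℕ) (x y : q) :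
    UniversalEnvelopingAlgebra.ι ℂ (jq k x) * UniversalEnvelopingAlgebra.ι ℂ (jq m y)
      - UniversalEnvelopingAlgebra.ι ℂ (jq m y) * UniversalEnvelopingAlgebra.ι ℂ (jq k x)
      = UniversalEnvelopingAlgebra.ι ℂ (jq (k + m) ⁅x, y⁆) := by
  rw [← hjq, LieHom.map_lie, LieRing.of_associative_ring_bracket]

lemma aux_shift (jq : ℕ → q →ₗ[ℂ] qt) (k j : ℕ) (w : q) :
    (k : ℂ) • UniversalEnvelopingAlgebra.ι ℂ (jq ((k - 1) + j) w)
      = (k : ℂ) • UniversalEnvelopingAlgebra.ι ℂ (jq ((k + j) - 1) w) := by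
  cases k with
  | zero => simp
  | succ k =>
    have h : (k + 1 - 1) + j = (k + 1 + j) - 1 := by omega
    rw [h]

end TakiffAux

section TakiffAux2

variable {g : Type} [LieRing g] [LieAlgebra ℂ g]
    {gt : Type} [LieRing gt] [LieAlgebra ℂ gt]
    {q : Type} [LieRing q] [LieAlgebra ℂ q]
    {qt : Type} [LieRing qt] [LieAlgebra ℂ qt]

lemma auxLmap_core (jg : ℕ → g →ₗ[ℂ] gt) (i0 i1 : g →ₗ[ℂ] q) (jq : ℕ → q →ₗ[ℂ] qt)
    (emb : gt →ₗ⁅ℂ⁆ qt)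
    (hgtInternal : DirectSum.IsInternal fun k : ℕ => LinearMap.range (jg k))
    (hjgInj : ∀ k, Function.Injective (jg k))
    (hjg : ∀ (k m : ℕ) (x y : g), ⁅jg k x, jg m y⁆ = jg (k + m) ⁅x, y⁆)
    (hjq : ∀ (k m : ℕ) (z w : q), ⁅jq k z, jq m w⁆ = jq (k + m) ⁅z, w⁆)
    (hq00 : ∀ x y : g, ⁅i0 x, i0 y⁆ = i0 ⁅x, y⁆)
    (hq01 : ∀ x y : g, ⁅i0 x, i1 y⁆ = i1 ⁅x, y⁆)
    (hemb : ∀ (k : ℕ) (x : g), emb (jg k x) = jq k (i0 x))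
    (k m : ℕ) (ξ η : g) :
    auxLmap jg i1 jq emb hgtInternal hjgInj ⁅jg k ξ, jg m η⁆
      = auxLmap jg i1 jq emb hgtInternal hjgInj (jg k ξ)
          * auxLmap jg i1 jq emb hgtInternal hjgInj (jg m η)
        - auxLmap jg i1 jq emb hgtInternal hjgInj (jg m η)
          * auxLmap jg i1 jq emb hgtInternal hjgInj (jg k ξ) := by
  rw [hjg]
  apply TrivSqZeroExt.ext
  · rw [TrivSqZeroExt.fst_sub, TrivSqZeroExt.fst_mul, TrivSqZeroExt.fst_mul,
      auxLmap_fst, auxLmap_fst, auxLmap_fst, hemb, hemb, hemb,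
      aux_comm jq hjq, hq00]
  · simp only [TrivSqZeroExt.snd_sub, TrivSqZeroExt.snd_mul, auxLmap_fst, auxLmap_snd,
      auxD_apply, hemb, smul_eq_mul, op_smul_eq_mul]
    set a := UniversalEnvelopingAlgebra.ι ℂ (jq k (i0 ξ)) with ha
    set b := UniversalEnvelopingAlgebra.ι ℂ (jq m (i0 η)) with hb
    set n := UniversalEnvelopingAlgebra.ι ℂ (jq (m - 1) (i1 η)) with hn
    set p := UniversalEnvelopingAlgebra.ι ℂ (jq (k - 1) (i1 ξ)) with hp
    have hcollect : a * ((m : ℂ) • n) + ((k : ℂ) • p) * b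
          - (b * ((k : ℂ) • p) + ((m : ℂ) • n) * a)
        = (m : ℂ) • (a * n - n * a) + (k : ℂ) • (p * b - b * p) := by
      rw [mul_smul_comm, smul_mul_assoc, mul_smul_comm, smul_mul_assoc, smul_sub, smul_sub]
      abel
    rw [hcollect, ha, hb, hn, hp, aux_comm jq hjq, aux_comm jq hjq, hq01]
    have hskew : ⁅i1 ξ, i0 η⁆ = i1 ⁅ξ, η⁆ := by
      rw [← lie_skew, hq01, ← map_neg, lie_skew]
    rw [hskew, show k + (m - 1) = (m - 1) + k from Nat.add_comm _ _,
      aux_shift jq m k, aux_shift jq k m, show m + k = k + m from Nat.add_comm _ _]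
    push_cast
    rw [add_smul]
    exact add_comm _ _

end TakiffAux2

section TakiffAux3

variable {g : Type} [LieRing g] [LieAlgebra ℂ g]
    {gt : Type} [LieRing gt] [LieAlgebra ℂ gt]
    {q : Type} [LieRing q] [LieAlgebra ℂ q]
    {qt : Type} [LieRing qt] [LieAlgebra ℂ qt]

/-- The Lie algebra map `𝔤[t] → U(𝔮[t])[ε]`. -/
noncomputable def auxLL (jg : ℕ → g →ₗ[ℂ] gt) (i0 i1 : g →ₗ[ℂ] q) (jq : ℕ → q →ₗ[ℂ] qt)
    (emb : gt →ₗ⁅ℂ⁆ qt)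
    (hgtInternal : DirectSum.IsInternal fun k : ℕ => LinearMap.range (jg k))
    (hjgInj : ∀ k, Function.Injective (jg k))
    (hjg : ∀ (k m : ℕ) (x y : g), ⁅jg k x, jg m y⁆ = jg (k + m) ⁅x, y⁆)
    (hjq : ∀ (k m : ℕ) (z w : q), ⁅jq k z, jq m w⁆ = jq (k + m) ⁅z, w⁆)
    (hq00 : ∀ x y : g, ⁅i0 x, i0 y⁆ = i0 ⁅x, y⁆)
    (hq01 : ∀ x y : g, ⁅i0 x, i1 y⁆ = i1 ⁅x, y⁆)
    (hemb : ∀ (k : ℕ) (x : g), emb (jg k x) = jq k (i0 x)) :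
    gt →ₗ⁅ℂ⁆ TrivSqZeroExt (UniversalEnvelopingAlgebra ℂ qt) (UniversalEnvelopingAlgebra ℂ qt) :=
  { auxLmap jg i1 jq emb hgtInternal hjgInj with
    map_lie' := by
      intro x y
      show auxLmap jg i1 jq emb hgtInternal hjgInj ⁅x, y⁆
        = ⁅auxLmap jg i1 jq emb hgtInternal hjgInj x, auxLmap jg i1 jq emb hgtInternal hjgInj y⁆
      rw [LieRing.of_associative_ring_bracket]
      have htop : ∀ z : gt, z ∈ ⨆ k, LinearMap.range (jg k) := fun z => by
        rw [hgtInternal.submodule_iSup_eq_top]; trivial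
      set L := auxLmap jg i1 jq emb hgtInternal hjgInj with hL
      refine Submodule.iSup_induction (motive := fun x => L ⁅x, y⁆ = L x * L y - L y * L x)
        (fun k => LinearMap.range (jg k)) (htop x) ?_ ?_ ?_
      · rintro k _ ⟨ξ, rfl⟩
        refine Submodule.iSup_induction
          (motive := fun y => L ⁅jg k ξ, y⁆ = L (jg k ξ) * L y - L y * L (jg k ξ))
          (fun m => LinearMap.range (jg m)) (htop y) ?_ ?_ ?_
        · rintro m _ ⟨η, rfl⟩
          exact auxLmap_core jg i0 i1 jq emb hgtInternal hjgInj hjg hjq hq00 hq01 hemb k m ξ η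
        · simp
        · intro y₁ y₂ h₁ h₂
          rw [lie_add, map_add, map_add, h₁, h₂, mul_add, add_mul]
          abel
      · simp
      · intro x₁ x₂ h₁ h₂
        rw [add_lie, map_add, map_add, h₁, h₂, add_mul, mul_add]
        abel }

lemma auxLL_apply (jg : ℕ → g →ₗ[ℂ] gt) (i0 i1 : g →ₗ[ℂ] q) (jq : ℕ → q →ₗ[ℂ] qt)
    (emb : gt →ₗ⁅ℂ⁆ qt) (hgtInternal) (hjgInj) (hjg) (hjq) (hq00) (hq01) (hemb) (x : gt) :
    auxLL jg i0 i1 jq emb hgtInternal hjgInj hjg hjq hq00 hq01 hemb x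
      = auxLmap jg i1 jq emb hgtInternal hjgInj x := rfl

end TakiffAux3

/-- Lemma `T`: there is a unique ℂ-linear map `𝒯 : U(t𝔤[t]) → U(𝔮[t])` with
`𝒯(ξtᵏ) = k·(ξu)t^{k−1}` and satisfying the Leibniz rule `𝒯(ab) = 𝒯(a)b + a𝒯(b)`, products
taken in `U(𝔮[t])` via the inclusion `U(t𝔤[t]) ⊆ U(𝔮[t])`. -/
theorem takiff_T_well_defined
    -- 𝔤: a simple complex Lie algebra
    {g : Type} [LieRing g] [LieAlgebra ℂ g] [LieAlgebra.IsSimple ℂ g] [Module.Finite ℂ g]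
    -- the current algebra 𝔤[t], with x tᵏ = jg k x
    {gt : Type} [LieRing gt] [LieAlgebra ℂ gt]
    (jg : ℕ → g →ₗ[ℂ] gt)
    (hjg : ∀ (k m : ℕ) (x y : g), ⁅jg k x, jg m y⁆ = jg (k + m) ⁅x, y⁆)
    (hgtInternal : DirectSum.IsInternal fun k : ℕ => LinearMap.range (jg k))
    (hjgInj : ∀ k, Function.Injective (jg k))
    -- the Takiff Lie algebra 𝔮 = 𝔤 ⋉ 𝔤u, with x = i0 x and xu = i1 x
    {q : Type} [LieRing q] [LieAlgebra ℂ q]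
    (i0 i1 : g →ₗ[ℂ] q)
    (hq00 : ∀ x y : g, ⁅i0 x, i0 y⁆ = i0 ⁅x, y⁆)
    (hq01 : ∀ x y : g, ⁅i0 x, i1 y⁆ = i1 ⁅x, y⁆)
    (hq11 : ∀ x y : g, ⁅i1 x, i1 y⁆ = 0)
    (hqCompl : IsCompl (LinearMap.range i0) (LinearMap.range i1))
    (hi0inj : Function.Injective i0) (hi1inj : Function.Injective i1)
    -- the current Lie algebra 𝔮[t], with z tᵏ = jq k z
    {qt : Type} [LieRing qt] [LieAlgebra ℂ qt]
    (jq : ℕ → q →ₗ[ℂ] qt)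
    (hjq : ∀ (k m : ℕ) (z w : q), ⁅jq k z, jq m w⁆ = jq (k + m) ⁅z, w⁆)
    (hqtInternal : DirectSum.IsInternal fun k : ℕ => LinearMap.range (jq k))
    (hjqInj : ∀ k, Function.Injective (jq k))
    -- the embedding 𝔤[t] → 𝔮[t], x tᵏ ↦ x tᵏ, inducing U(t𝔤[t]) ⊆ U(𝔮[t])
    (emb : gt →ₗ⁅ℂ⁆ qt)
    (hemb : ∀ (k : ℕ) (x : g), emb (jg k x) = jq k (i0 x)) :
    ∃! 𝒯 : ↥(tPartSubalgebra jg) →ₗ[ℂ] UniversalEnvelopingAlgebra ℂ qt,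
      (∀ (x : g) (k : ℕ) (hk : 1 ≤ k),
        𝒯 ⟨UniversalEnvelopingAlgebra.ι ℂ (jg k x), Algebra.subset_adjoin ⟨x, k, hk, rfl⟩⟩
          = (k : ℂ) • UniversalEnvelopingAlgebra.ι ℂ (jq (k - 1) (i1 x)))
      ∧ (∀ a b : ↥(tPartSubalgebra jg),
        𝒯 (a * b)
          = 𝒯 a * (UniversalEnvelopingAlgebra.lift ℂ
              ((UniversalEnvelopingAlgebra.ι ℂ).comp emb)) ↑b
            + (UniversalEnvelopingAlgebra.lift ℂ
              ((UniversalEnvelopingAlgebra.ι ℂ).comp emb)) ↑a * 𝒯 b) := by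
  classical
  let LL := auxLL jg i0 i1 jq emb hgtInternal hjgInj hjg hjq hq00 hq01 hemb
  let Ψ := UniversalEnvelopingAlgebra.lift ℂ LL
  have hΨι : ∀ z : gt, Ψ (UniversalEnvelopingAlgebra.ι ℂ z) = LL z := fun z =>
    UniversalEnvelopingAlgebra.lift_ι_apply ℂ LL z
  have hfstΨ : ∀ a : UniversalEnvelopingAlgebra ℂ gt,
      (Ψ a).fst = UniversalEnvelopingAlgebra.lift ℂ
        ((UniversalEnvelopingAlgebra.ι ℂ).comp emb) a := by
    have h : (TrivSqZeroExt.fstHom ℂ (UniversalEnvelopingAlgebra ℂ qt)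
          (UniversalEnvelopingAlgebra ℂ qt)).comp Ψ
        = UniversalEnvelopingAlgebra.lift ℂ ((UniversalEnvelopingAlgebra.ι ℂ).comp emb) := by
      ext z
      show (Ψ (UniversalEnvelopingAlgebra.ι ℂ z)).fst
        = UniversalEnvelopingAlgebra.lift ℂ ((UniversalEnvelopingAlgebra.ι ℂ).comp emb)
            (UniversalEnvelopingAlgebra.ι ℂ z)
      rw [hΨι, UniversalEnvelopingAlgebra.lift_ι_apply]
      show (auxLmap jg i1 jq emb hgtInternal hjgInj z).fst = _
      rw [auxLmap_fst]
      rfl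
    intro a
    exact DFunLike.congr_fun h a
  let T : ↥(tPartSubalgebra jg) →ₗ[ℂ] UniversalEnvelopingAlgebra ℂ qt :=
    { toFun := fun a => (Ψ (a : UniversalEnvelopingAlgebra ℂ gt)).snd
      map_add' := fun a b => by simp [TrivSqZeroExt.snd_add]
      map_smul' := fun c a => by simp [TrivSqZeroExt.snd_smul] }
  have hprop1 : ∀ (x : g) (k : ℕ) (hk : 1 ≤ k),
      T ⟨UniversalEnvelopingAlgebra.ι ℂ (jg k x), Algebra.subset_adjoin ⟨x, k, hk, rfl⟩⟩
        = (k : ℂ) • UniversalEnvelopingAlgebra.ι ℂ (jq (k - 1) (i1 x)) := by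
    intro x k hk
    show (Ψ (UniversalEnvelopingAlgebra.ι ℂ (jg k x))).snd = _
    rw [hΨι]
    show (auxLmap jg i1 jq emb hgtInternal hjgInj (jg k x)).snd = _
    rw [auxLmap_snd, auxD_apply]
  have hprop2 : ∀ a b : ↥(tPartSubalgebra jg),
      T (a * b)
        = T a * (UniversalEnvelopingAlgebra.lift ℂ
            ((UniversalEnvelopingAlgebra.ι ℂ).comp emb)) ↑b
          + (UniversalEnvelopingAlgebra.lift ℂ
            ((UniversalEnvelopingAlgebra.ι ℂ).comp emb)) ↑a * T b := by
    intro a b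
    show (Ψ ((a : UniversalEnvelopingAlgebra ℂ gt) * ↑b)).snd = _
    rw [map_mul, TrivSqZeroExt.snd_mul]
    simp only [smul_eq_mul, op_smul_eq_mul, hfstΨ]
    exact add_comm _ _
  refine ⟨T, ⟨hprop1, hprop2⟩, ?_⟩
  rintro T' ⟨h1', h2'⟩
  have hT'one : T' 1 = 0 := by
    have h := h2' 1 1
    rw [mul_one] at h
    simp only [OneMemClass.coe_one, map_one, mul_one, one_mul] at h
    exact left_eq_add.mp h
  have hTone : T 1 = 0 := by
    show (Ψ ((1 : ↥(tPartSubalgebra jg)) : UniversalEnvelopingAlgebra ℂ gt)).snd = 0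
    rw [OneMemClass.coe_one, map_one, TrivSqZeroExt.snd_one]
  apply LinearMap.ext
  rintro ⟨x, hx⟩
  refine Algebra.adjoin_induction (p := fun x hx => T' ⟨x, hx⟩ = T ⟨x, hx⟩)
    ?_ ?_ ?_ ?_ hx
  · rintro z ⟨x, k, hk, rfl⟩
    exact (h1' x k hk).trans (hprop1 x k hk).symm
  · intro r
    have hval : ∀ h, (⟨algebraMap ℂ (UniversalEnvelopingAlgebra ℂ gt) r, h⟩ :
        ↥(tPartSubalgebra jg)) = r • 1 := fun h =>
      Subtype.ext (by simp [Algebra.algebraMap_eq_smul_one])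
    refine (congrArg T' (hval _)).trans ((?_ : T' (r • 1) = T (r • 1)).trans (congrArg T (hval _)).symm)
    rw [map_smul, map_smul, hT'one, hTone]
  · intro x y hx hy ihx ihy
    have h : (⟨x + y, add_mem hx hy⟩ : ↥(tPartSubalgebra jg)) = ⟨x, hx⟩ + ⟨y, hy⟩ := rfl
    rw [h, map_add, map_add, ihx, ihy]
  · intro x y hx hy ihx ihy
    have h : (⟨x * y, mul_mem hx hy⟩ : ↥(tPartSubalgebra jg)) = ⟨x, hx⟩ * ⟨y, hy⟩ := rfl
    rw [h, h2' ⟨x, hx⟩ ⟨y, hy⟩, ihx, ihy, ← hprop2 ⟨x, hx⟩ ⟨y, hy⟩]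


end
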